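/- Suppose the system is operated under the MaxWeight policy with weight matrix D and ρ ∉ 𝒫, and suppose η := lim_{t→∞} X(t)/t exists. Then η is a fixed point: there exist α_1, …, α_N with α_m ≥ 0 and Σ_{m=1}^N α_m = 1 such that η = (ρ − Σ_{m=1}^N α_m S_m)⁺; moreover, for every m with α_m > 0 one has ⟨S_m, D·η⟩ = max_{S∈𝒮} ⟨S, D·η⟩. -/

import Mathlib

/-!
Along a subsequence the empirical frequencies with which the schedules are used converge to some
α in the simplex, so the cumulative service offered to queue q grows like t · Σ α_m S_m q.
A queue with η_q > 0 is eventually never empty, so its departures equal the service offered and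
η_q = ρ_q − Σ α_m S_m q; a queue with η_q = 0 cannot have received more than that service, so
ρ_q ≤ Σ α_m S_m q. A schedule with α_m > 0 is used infinitely often, and each time it maximises
⟨S, D X(t)⟩ = t ⟨S, D X(t)/t⟩; passing to the limit along those times, it maximises ⟨S, D η⟩.
-/

open Finset Filter Topology

/-- The stability region: loads dominated by a convex combination of service vectors. -/
def stabRegion {Q N : ℕ} (S : Fin N → Fin Q → ℝ) : Set (Fin Q → ℝ) :=
  {r | (∀ q, 0 ≤ r q) ∧ ∃ α : Fin N → ℝ, (∀ i, 0 ≤ α i) ∧ (∑ i, α i) = 1 ∧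
    ∀ q, r q ≤ ∑ i, α i * S i q}

noncomputable def runningAvg (f : ℕ → ℝ) (t : ℕ) : ℝ := (∑ i ∈ range t, f i) / t

lemma runningAvg_sub (f g : ℕ → ℝ) (t : ℕ) :
    runningAvg (fun i => f i - g i) t = runningAvg f t - runningAvg g t := by
  simp only [runningAvg, sum_sub_distrib, sub_div]

lemma runningAvg_const {c : ℝ} {t : ℕ} (ht : t ≠ 0) : runningAvg (fun _ => c) t = c := by
  simp [runningAvg, ht]

lemma tendsto_runningAvg_zero_of_eventually_eq_zero {f : ℕ → ℝ} (hf : ∀ᶠ t in atTop, f t = 0) :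
    Tendsto (runningAvg f) atTop (𝓝 0) := by
  refine (tendsto_const_nhds.congr' (EventuallyEq.symm hf)).cesaro.congr fun t => ?_
  rw [runningAvg, div_eq_inv_mul]

section EmpiricalFreq

variable {ι : Type*} [DecidableEq ι]

noncomputable def empiricalFreq (σ : ℕ → ι) (t : ℕ) (m : ι) : ℝ :=
  runningAvg (fun i => if σ i = m then 1 else 0) t

lemma runningAvg_comp_eq_sum_empiricalFreq_mul [Fintype ι] (σ : ℕ → ι) (f : ι → ℝ) (t : ℕ) :
    runningAvg (fun i => f (σ i)) t = ∑ m, empiricalFreq σ t m * f m := by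
  simp only [empiricalFreq, runningAvg, div_mul_eq_mul_div, ← sum_div, sum_mul, ite_mul, one_mul,
    zero_mul]
  rw [sum_comm]
  simp

lemma empiricalFreq_mem_stdSimplex [Fintype ι] (σ : ℕ → ι) {t : ℕ} (ht : t ≠ 0) :
    empiricalFreq σ t ∈ stdSimplex ℝ ι := by
  refine ⟨fun m => div_nonneg (sum_nonneg fun i _ => ?_) t.cast_nonneg, ?_⟩
  · split_ifs <;> norm_num
  · simpa [runningAvg_const ht] using (runningAvg_comp_eq_sum_empiricalFreq_mul σ 1 t).symm

lemma exists_tendsto_empiricalFreq [Fintype ι] (σ : ℕ → ι) :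
    ∃ α ∈ stdSimplex ℝ ι, ∃ l ≤ atTop, l.NeBot ∧ Tendsto (empiricalFreq σ) l (𝓝 α) := by
  obtain ⟨α, hα, φ, hφ, hlim⟩ := (isCompact_stdSimplex ℝ ι).tendsto_subseq'
    (eventually_ne_atTop 0 |>.mono fun t ht => empiricalFreq_mem_stdSimplex σ ht).frequently
  exact ⟨α, hα, map φ atTop, hφ.tendsto_atTop, inferInstance, tendsto_map'_iff.2 hlim⟩

lemma frequently_eq_of_tendsto_empiricalFreq {σ : ℕ → ι} {m : ι} {c : ℝ} {l : Filter ℕ}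
    [l.NeBot] (hl : l ≤ atTop) (h : Tendsto (fun t => empiricalFreq σ t m) l (𝓝 c))
    (hc : c ≠ 0) : ∃ᶠ t in atTop, σ t = m := by
  by_contra hfin
  have hzero : Tendsto (fun t => empiricalFreq σ t m) atTop (𝓝 0) :=
    tendsto_runningAvg_zero_of_eventually_eq_zero <|
      (not_frequently.1 hfin).mono fun t ht => if_neg ht
  exact hc (tendsto_nhds_unique h (hzero.mono_left hl))

end EmpiricalFreq

lemma tendsto_atTop_of_tendsto_div_pos {x : ℕ → ℝ} {η : ℝ}
    (h : Tendsto (fun t : ℕ => x t / t) atTop (𝓝 η)) (hη : 0 < η) : Tendsto x atTop atTop := by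
  refine (h.pos_mul_atTop hη tendsto_natCast_atTop_atTop).congr' ?_
  filter_upwards [eventually_ne_atTop 0] with t ht
  exact div_mul_cancel₀ _ (Nat.cast_ne_zero.2 ht)

section Queue

variable {a s X : ℕ → ℝ}

lemma queue_nonneg (hrec : ∀ t, X (t + 1) = X t + a t - min (s t) (X t)) (h0 : 0 ≤ X 0)
    (ha : ∀ t, 0 ≤ a t) (t : ℕ) : 0 ≤ X t := by
  induction t with
  | zero => exact h0
  | succ t ih => linarith [hrec t, ha t, min_le_right (s t) (X t)]

lemma sum_sub_le_queue (hrec : ∀ t, X (t + 1) = X t + a t - min (s t) (X t)) (h0 : X 0 = 0)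
    (t : ℕ) : ∑ i ∈ range t, (a i - s i) ≤ X t := by
  induction t with
  | zero => simp [h0]
  | succ t ih => linarith [sum_range_succ (fun i => a i - s i) t, hrec t, min_le_left (s t) (X t)]

lemma queue_sub_sum_eq_of_le (hrec : ∀ t, X (t + 1) = X t + a t - min (s t) (X t)) {T : ℕ}
    (hT : ∀ t ≥ T, s t ≤ X t) {t : ℕ} (ht : T ≤ t) :
    X t - ∑ i ∈ range t, (a i - s i) = X T - ∑ i ∈ range T, (a i - s i) := by
  induction t, ht using Nat.le_induction with
  | base => rfl
  | succ t ht ih => rw [← ih, sum_range_succ, hrec, min_eq_left (hT t ht)]; ring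

lemma queue_fluid_limit (hrec : ∀ t, X (t + 1) = X t + a t - min (s t) (X t)) (h0 : X 0 = 0)
    (ha0 : ∀ t, 0 ≤ a t) (hs : BddAbove (Set.range s)) {l : Filter ℕ} [l.NeBot] (hl : l ≤ atTop)
    {η ρ μ : ℝ} (hX : Tendsto (fun t : ℕ => X t / t) atTop (𝓝 η))
    (ha : Tendsto (runningAvg a) l (𝓝 ρ)) (hsμ : Tendsto (runningAvg s) l (𝓝 μ)) :
    η = max (ρ - μ) 0 := by
  have hη0 : 0 ≤ η := ge_of_tendsto' hX fun t =>
    div_nonneg (queue_nonneg hrec h0.ge ha0 t) t.cast_nonneg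
  have hnet : Tendsto (fun t => runningAvg (fun i => a i - s i) t) l (𝓝 (ρ - μ)) := by
    simpa only [runningAvg_sub] using ha.sub hsμ
  rcases hη0.lt_or_eq with hpos | hzero
  · obtain ⟨B, hB⟩ := hs
    obtain ⟨T, hT⟩ := eventually_atTop.1
      ((tendsto_atTop_of_tendsto_div_pos hX hpos).eventually_ge_atTop B)
    set C := X T - ∑ i ∈ range T, (a i - s i)
    have hC : Tendsto (fun t : ℕ => C / t + runningAvg (fun i => a i - s i) t) l
        (𝓝 (0 + (ρ - μ))) :=
      ((tendsto_const_div_atTop_nhds_zero_nat C).mono_left hl).add hnet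
    have hCX : (fun t : ℕ => C / t + runningAvg (fun i => a i - s i) t) =ᶠ[l] fun t => X t / t := by
      filter_upwards [hl (eventually_ge_atTop T)] with t ht
      have hCt : C = X t - ∑ i ∈ range t, (a i - s i) :=
        (queue_sub_sum_eq_of_le hrec (fun t ht => (hB ⟨t, rfl⟩).trans (hT t ht)) ht).symm
      rw [runningAvg, ← add_div, hCt, sub_add_cancel]
    rw [tendsto_nhds_unique (hX.mono_left hl) (hC.congr' hCX), zero_add] at hpos ⊢
    exact (max_eq_left hpos.le).symm
  · have hle : ρ - μ ≤ 0 := hzero ▸ le_of_tendsto_of_tendsto' hnet (hX.mono_left hl) fun t =>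
      div_le_div_of_nonneg_right (sum_sub_le_queue hrec h0 t) t.cast_nonneg
    rw [← hzero, max_eq_right hle]

end Queue

lemma maxWeight_le_of_frequently_eq {ι κ : Type*} [Fintype κ] (S : ι → κ → ℝ) (d : κ → ℝ)
    {σ : ℕ → ι} {x : ℕ → κ → ℝ} {η : κ → ℝ}
    (hMW : ∀ t j, ∑ q, S j q * (d q * x t q) ≤ ∑ q, S (σ t) q * (d q * x t q))
    (hx : Tendsto (fun t : ℕ => fun q => x t q / t) atTop (𝓝 η)) {m : ι}
    (hm : ∃ᶠ t in atTop, σ t = m) (j : ι) :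
    ∑ q, S j q * (d q * η q) ≤ ∑ q, S m q * (d q * η q) := by
  have hweight : ∀ i, Tendsto (fun t : ℕ => ∑ q, S i q * (d q * (x t q / t))) atTop
      (𝓝 (∑ q, S i q * (d q * η q))) := fun i =>
    tendsto_finsetSum _ fun q _ => ((tendsto_pi_nhds.1 hx q).const_mul _).const_mul _
  have := frequently_iff_neBot.1 hm
  refine le_of_tendsto_of_tendsto (b := atTop ⊓ 𝓟 {t | σ t = m}) ((hweight j).mono_left inf_le_left)
    ((hweight m).mono_left inf_le_left) ?_
  filter_upwards [mem_inf_of_right (mem_principal_self _)] with t (ht : σ t = m)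
  simp only [mul_div_assoc', ← sum_div]
  exact div_le_div_of_nonneg_right (ht ▸ hMW t j) t.cast_nonneg

theorem stmt9_general {Q N : ℕ}
    (A : ℕ → Fin Q → ℝ)
    (hA0 : ∀ t q, 0 ≤ A t q)
    (ρ : Fin Q → ℝ)
    (hρ : ∀ q, Tendsto (fun t : ℕ => (∑ s ∈ Finset.range t, A s q) / (t : ℝ))
      atTop (𝓝 (ρ q)))
    (S : Fin N → Fin Q → ℝ)
    (σ : ℕ → Fin N)
    (d : Fin Q → ℝ)
    (X : ℕ → Fin Q → ℝ) (hX0 : ∀ q, X 0 q = 0)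
    (hXrec : ∀ t q, X (t + 1) q = X t q + A t q - min (S (σ t) q) (X t q))
    (hMW : ∀ t j, ∑ q, S j q * (d q * X t q) ≤ ∑ q, S (σ t) q * (d q * X t q))
    (η : Fin Q → ℝ)
    (hηlim : Tendsto (fun t : ℕ => fun q => X t q / (t : ℝ)) atTop (𝓝 η)) :
    ∃ α : Fin N → ℝ, (∀ m, 0 ≤ α m) ∧ (∑ m, α m) = 1 ∧
      (∀ q, η q = max (ρ q - ∑ m, α m * S m q) 0) ∧
      ∀ m, 0 < α m →
        ∑ q, S m q * (d q * η q) = ⨆ j, ∑ q, S j q * (d q * η q) := by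
  obtain ⟨α, ⟨hα0, hα1⟩, l, hl, hlne, hfreq⟩ := exists_tendsto_empiricalFreq σ
  have hservice : ∀ q, Tendsto (runningAvg fun t => S (σ t) q) l (𝓝 (∑ m, α m * S m q)) := by
    intro q
    simp only [funext (runningAvg_comp_eq_sum_empiricalFreq_mul σ (S · q))]
    exact tendsto_finsetSum _ fun m _ => (tendsto_pi_nhds.1 hfreq m).mul_const _
  refine ⟨α, hα0, hα1, fun q => ?_, fun m hm => ?_⟩
  · exact queue_fluid_limit (hXrec · q) (hX0 q) (hA0 · q)
      ((Set.finite_range (S · q)).bddAbove.mono (Set.range_comp_subset_range σ (S · q))) hl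
      (tendsto_pi_nhds.1 hηlim q) ((hρ q).mono_left hl) (hservice q)
  · have : Nonempty (Fin N) := ⟨m⟩
    have hchosen := frequently_eq_of_tendsto_empiricalFreq hl (tendsto_pi_nhds.1 hfreq m) hm.ne'
    exact le_antisymm
      (le_ciSup (f := fun j => ∑ q, S j q * (d q * η q)) (Set.finite_range _).bddAbove m)
      (ciSup_le (maxWeight_le_of_frequently_eq S d hMW hηlim hchosen))

/-- under MaxWeight in overload, the limit η of X(t)/t is a fixed point:
η = (ρ − Σ α_m S_m)⁺ with α ≥ 0, Σ α = 1, and each S_m with α_m > 0 attains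
max_{S∈𝒮} ⟨S, Dη⟩. -/
theorem stmt9 {Q N : ℕ} (hQ : 0 < Q) (hN : 0 < N)
    (A : ℕ → Fin Q → ℝ) (Abar : Fin Q → ℝ)
    (hA0 : ∀ t q, 0 ≤ A t q) (hAbar : ∀ t q, A t q ≤ Abar q)
    (ρ : Fin Q → ℝ) (hρpos : ∀ q, 0 < ρ q)
    (hρ : ∀ q, Tendsto (fun t : ℕ => (∑ s ∈ Finset.range t, A s q) / (t : ℝ))
      atTop (𝓝 (ρ q)))
    (S : Fin N → Fin Q → ℝ) (hS : ∀ i q, 0 ≤ S i q)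
    (σ : ℕ → Fin N)
    (d : Fin Q → ℝ) (hd : ∀ q, 0 < d q)
    (X : ℕ → Fin Q → ℝ) (hX0 : ∀ q, X 0 q = 0)
    (hXrec : ∀ t q, X (t + 1) q = X t q + A t q - min (S (σ t) q) (X t q))
    (hMW : ∀ t j, ∑ q, S j q * (d q * X t q) ≤ ∑ q, S (σ t) q * (d q * X t q))
    (hover : ρ ∉ stabRegion S)
    (η : Fin Q → ℝ)
    (hηlim : Tendsto (fun t : ℕ => fun q => X t q / (t : ℝ)) atTop (𝓝 η)) :
    ∃ α : Fin N → ℝ, (∀ m, 0 ≤ α m) ∧ (∑ m, α m) = 1 ∧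
      (∀ q, η q = max (ρ q - ∑ m, α m * S m q) 0) ∧
      ∀ m, 0 < α m →
        ∑ q, S m q * (d q * η q) = ⨆ j, ∑ q, S j q * (d q * η q) :=
  stmt9_general A hA0 ρ hρ S σ d X hX0 hXrec hMW η hηlim
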